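/- Let a, b, c, d be integers with ad − bc = ±1 and abcd ≠ 0, and suppose b is odd. Let π be the group with presentation ⟨u, v, y | uyu⁻¹ = y⁻¹, v² = u^{2a} y^{b}, v u^{2c} y^{d} v⁻¹ = u^{−2c} y^{−d}⟩. Then the abelianization of π is isomorphic to ℤ/4|c|ℤ ⊕ ℤ/4ℤ, with the two summands generated by the images of u and of u^{−a}v respectively. -/

import Mathlib

/-- The relators of `π = ⟨u, v, y | uyu⁻¹ = y⁻¹, v² = u^{2a} y^{b},
v u^{2c} y^{d} v⁻¹ = u^{−2c} y^{−d}⟩`, with generators `u = 0`, `v = 1`, `y = 2`. -/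
def solRels (a b c d : ℤ) : Set (FreeGroup (Fin 3)) :=
  { FreeGroup.of 0 * FreeGroup.of 2 * (FreeGroup.of 0)⁻¹ * FreeGroup.of 2,
    ((FreeGroup.of 1) ^ 2)⁻¹ * (FreeGroup.of 0) ^ (2 * a) * (FreeGroup.of 2) ^ b,
    (FreeGroup.of 1 * ((FreeGroup.of 0) ^ (2 * c) * (FreeGroup.of 2) ^ d) *
        (FreeGroup.of 1)⁻¹) * ((FreeGroup.of 0) ^ (2 * c) * (FreeGroup.of 2) ^ d) }

/-! In a commutative group the three relators say `y² = 1`, `v² = u^{2a} y^b` and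
`(u^{2c} y^d)² = 1`. As `b` is odd, `w = u^{-a} v` satisfies `w² = u^{-2a} v² = y^b = y`, so `y`
is redundant, `w⁴ = y² = 1` and `u^{4c} = (u^{2c} y^d)² = 1`. Conversely `u ↦ (1, 0)`,
`v ↦ (a, 1)`, `y ↦ (0, 2)` satisfies the relations in `ℤ/4|c| × ℤ/4`, and the induced map is
inverse to `(i, j) ↦ u^i w^j`. -/

theorem PresentedGroup.lift_comp_of_eq_one {α G : Type*} [Group G] {rels : Set (FreeGroup α)}
    (φ : PresentedGroup rels →* G) {r : FreeGroup α} (hr : r ∈ rels) :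
    FreeGroup.lift (φ ∘ PresentedGroup.of) r = 1 := by
  rw [← FreeGroup.lift_unique (f := φ ∘ PresentedGroup.of) (φ.comp (PresentedGroup.mk rels))
    fun _ => rfl, MonoidHom.comp_apply, PresentedGroup.one_of_mem hr, map_one]

namespace ZMod

variable {G : Type*} [CommGroup G] {m n : ℕ}

def liftProd (x y : G) (hx : x ^ m = 1) (hy : y ^ n = 1) :
    Multiplicative (ZMod m × ZMod n) →* G :=
  AddMonoidHom.toMultiplicativeLeft <|
    (ZMod.lift m ⟨zmultiplesHom _ (Additive.ofMul x), by simp [← ofMul_pow, hx]⟩).coprod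
      (ZMod.lift n ⟨zmultiplesHom _ (Additive.ofMul y), by simp [← ofMul_pow, hy]⟩)

theorem liftProd_ofAdd_intCast (x y : G) (hx : x ^ m = 1) (hy : y ^ n = 1) (i j : ℤ) :
    liftProd x y hx hy (Multiplicative.ofAdd ((i : ZMod m), (j : ZMod n))) = x ^ i * y ^ j := by
  simp [liftProd]

end ZMod

section CommGroup

variable {G : Type*} [CommGroup G]

theorem solRels.lift_eq_one_iff (a b c d : ℤ) (f : Fin 3 → G) :
    (∀ r ∈ solRels a b c d, FreeGroup.lift f r = 1) ↔
      f 2 ^ 2 = 1 ∧ f 1 ^ 2 = f 0 ^ (2 * a) * f 2 ^ b ∧ (f 0 ^ (2 * c) * f 2 ^ d) ^ 2 = 1 := by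
  simp only [solRels, Set.forall_mem_insert, Set.mem_singleton_iff, forall_eq, map_mul, map_inv,
    map_pow, map_zpow, FreeGroup.lift_apply_of]
  rw [mul_right_comm (f 0), mul_inv_cancel, one_mul, ← sq, mul_assoc, inv_mul_eq_one,
    mul_right_comm (f 1), mul_inv_cancel, one_mul, ← sq]

variable {a b c d : ℤ} {u v y : G}

theorem sq_zpow_neg_mul_eq (hb : Odd b) (hy : y ^ 2 = 1) (hv : v ^ 2 = u ^ (2 * a) * y ^ b) :
    (u ^ (-a) * v) ^ 2 = y := by
  obtain ⟨k, rfl⟩ := hb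
  calc (u ^ (-a) * v) ^ 2 = (u ^ (2 * a))⁻¹ * v ^ 2 := by
        rw [mul_pow, ← zpow_natCast, ← zpow_mul, ← zpow_neg]; ring_nf
    _ = y ^ (2 * k + 1) := by rw [hv, inv_mul_cancel_left]
    _ = y := by rw [zpow_add, zpow_mul, zpow_ofNat, hy, one_zpow, one_mul, zpow_one]

theorem pow_four_mul_natAbs_eq_one (hy : y ^ 2 = 1) (hc : (u ^ (2 * c) * y ^ d) ^ 2 = 1) :
    u ^ (4 * c.natAbs) = 1 := by
  rw [show 4 * c.natAbs = (4 * c).natAbs by rw [Int.natAbs_mul]; rfl, pow_natAbs_eq_one]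
  calc u ^ (4 * c) = (u ^ (2 * c) * y ^ d) ^ 2 := by
        rw [mul_pow, ← zpow_natCast, ← zpow_natCast (y ^ d), ← zpow_mul, ← zpow_mul, mul_comm d,
          zpow_mul y, zpow_natCast, hy, one_zpow, mul_one]; ring_nf
    _ = 1 := hc

end CommGroup

namespace solRels

variable (a c d : ℤ) {b : ℤ}

def abelGen : Fin 3 → Multiplicative (ZMod (4 * c.natAbs) × ZMod 4) :=
  ![.ofAdd (1, 0), .ofAdd (a, 1), .ofAdd (0, 2)]

theorem abelGen_lift_eq_one (hb : Odd b) :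
    ∀ r ∈ solRels a b c d, FreeGroup.lift (abelGen a c) r = 1 := by
  have h4 : (4 : ZMod 4) = 0 := rfl
  have h4c : (4 * c : ZMod (4 * c.natAbs)) = 0 := by
    rw [← Int.cast_ofNat, ← Int.cast_mul, ZMod.intCast_zmod_eq_zero_iff_dvd, Nat.cast_mul,
      Int.natCast_natAbs]
    exact mul_dvd_mul_left 4 (abs_dvd_self c)
  obtain ⟨k, rfl⟩ := hb
  rw [lift_eq_one_iff]
  refine ⟨?_, ?_, ?_⟩ <;> apply Multiplicative.toAdd.injective <;>
    simp only [abelGen, Matrix.cons_val, Matrix.cons_val_zero, Matrix.cons_val_one, toAdd_one,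
      toAdd_mul, toAdd_pow, toAdd_zpow, toAdd_ofAdd, Prod.smul_mk, Prod.mk_add_mk, Prod.ext_iff,
      Prod.fst_zero, Prod.snd_zero, nsmul_eq_mul, zsmul_eq_mul, smul_zero, Int.cast_mul,
      Int.cast_add, Int.cast_ofNat, Int.cast_one, Nat.cast_ofNat, mul_one, add_zero, zero_add,
      true_and]
  · linear_combination h4
  · linear_combination (-k : ZMod 4) * h4
  · exact ⟨by linear_combination h4c, by linear_combination (d : ZMod 4) * h4⟩

variable (hb : Odd b)

def toModel : Abelianization (PresentedGroup (solRels a b c d)) →*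
    Multiplicative (ZMod (4 * c.natAbs) × ZMod 4) :=
  Abelianization.lift (PresentedGroup.toGroup (abelGen_lift_eq_one a c d hb))

theorem toModel_of (i : Fin 3) :
    toModel a c d hb (.of (.of i)) = abelGen a c i := by
  simp [toModel, PresentedGroup.toGroup.of]

local notation "gen" i => Abelianization.of (PresentedGroup.of (rels := solRels a b c d) i)

theorem abelianization_relations :
    (gen 2) ^ 2 = 1 ∧ (gen 1) ^ 2 = (gen 0) ^ (2 * a) * (gen 2) ^ b ∧
      ((gen 0) ^ (2 * c) * (gen 2) ^ d) ^ 2 = 1 :=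
  (lift_eq_one_iff a b c d _).1 fun _ hr =>
    PresentedGroup.lift_comp_of_eq_one Abelianization.of hr

def ofModel : Multiplicative (ZMod (4 * c.natAbs) × ZMod 4) →*
    Abelianization (PresentedGroup (solRels a b c d)) :=
  ZMod.liftProd (gen 0) ((gen 0) ^ (-a) * gen 1)
    (pow_four_mul_natAbs_eq_one (abelianization_relations a c d).1
      (abelianization_relations a c d).2.2)
    (by
      obtain ⟨hy, hv, -⟩ := abelianization_relations a c d
      rw [show 4 = 2 * 2 from rfl, pow_mul, sq_zpow_neg_mul_eq hb hy hv, hy])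

theorem ofModel_ofAdd_intCast (i j : ℤ) :
    ofModel a c d hb (.ofAdd ((i : ZMod (4 * c.natAbs)), (j : ZMod 4))) =
      (gen 0) ^ i * ((gen 0) ^ (-a) * gen 1) ^ j :=
  ZMod.liftProd_ofAdd_intCast ..

theorem ofModel_comp_toModel : (ofModel a c d hb).comp (toModel a c d hb) = .id _ := by
  refine Abelianization.hom_ext _ _ (PresentedGroup.ext fun i => ?_)
  obtain ⟨hy, hv, -⟩ := abelianization_relations a c d
  fin_cases i <;> simp only [MonoidHom.comp_apply, MonoidHom.id_apply, toModel_of, abelGen]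
  · simpa using ofModel_ofAdd_intCast a c d hb 1 0
  · simpa using ofModel_ofAdd_intCast a c d hb a 1
  · have h := ofModel_ofAdd_intCast a c d hb 0 2
    rwa [zpow_zero, one_mul, zpow_ofNat, sq_zpow_neg_mul_eq hb hy hv, Int.cast_zero,
      Int.cast_ofNat] at h

theorem toModel_comp_ofModel : (toModel a c d hb).comp (ofModel a c d hb) = .id _ := by
  refine MonoidHom.ext fun g => ?_
  obtain ⟨i, hi⟩ := ZMod.intCast_surjective g.toAdd.1
  obtain ⟨j, hj⟩ := ZMod.intCast_surjective g.toAdd.2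
  obtain rfl : g = .ofAdd ((i : ZMod (4 * c.natAbs)), (j : ZMod 4)) := by rw [hi, hj]; rfl
  apply Multiplicative.toAdd.injective
  simp [ofModel_ofAdd_intCast, toModel_of, abelGen]

def abelianizationEquiv : Abelianization (PresentedGroup (solRels a b c d)) ≃*
    Multiplicative (ZMod (4 * c.natAbs) × ZMod 4) :=
  (toModel a c d hb).toMulEquiv (ofModel a c d hb) (ofModel_comp_toModel a c d hb)
    (toModel_comp_ofModel a c d hb)

end solRels

theorem stmt17_general (a b c d : ℤ)
    (hb : Odd b) :
    ∃ e : Abelianization (PresentedGroup (solRels a b c d)) ≃*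
        Multiplicative (ZMod (4 * c.natAbs) × ZMod 4),
      e (Abelianization.of (PresentedGroup.of 0)) =
        Multiplicative.ofAdd ((1 : ZMod (4 * c.natAbs)), (0 : ZMod 4)) ∧
      e (Abelianization.of ((PresentedGroup.of 0) ^ (-a) * PresentedGroup.of 1)) =
        Multiplicative.ofAdd ((0 : ZMod (4 * c.natAbs)), (1 : ZMod 4)) := by
  refine ⟨solRels.abelianizationEquiv a c d hb, solRels.toModel_of a c d hb 0, ?_⟩
  apply Multiplicative.toAdd.injective
  simp [solRels.abelianizationEquiv, solRels.toModel_of, solRels.abelGen]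

/-- for `ad − bc = ±1`, `abcd ≠ 0` and `b` odd, the abelianization of
`π = ⟨u, v, y | uyu⁻¹ = y⁻¹, v² = u^{2a}y^{b}, vu^{2c}y^{d}v⁻¹ = u^{−2c}y^{−d}⟩`
is `ℤ/4|c|ℤ ⊕ ℤ/4ℤ`, the summands being generated by the images of `u` and of
`u^{−a}v` respectively. -/
theorem stmt17 (a b c d : ℤ)
    (hdet : a * d - b * c = 1 ∨ a * d - b * c = -1)
    (h0 : a * b * c * d ≠ 0) (hb : Odd b) :
    ∃ e : Abelianization (PresentedGroup (solRels a b c d)) ≃*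
        Multiplicative (ZMod (4 * c.natAbs) × ZMod 4),
      e (Abelianization.of (PresentedGroup.of 0)) =
        Multiplicative.ofAdd ((1 : ZMod (4 * c.natAbs)), (0 : ZMod 4)) ∧
      e (Abelianization.of ((PresentedGroup.of 0) ^ (-a) * PresentedGroup.of 1)) =
        Multiplicative.ofAdd ((0 : ZMod (4 * c.natAbs)), (1 : ZMod 4)) :=
  stmt17_general a b c d hb
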